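/- arXiv:math/0702134 — 2 statements merged into one kernel-verified Lean document; each statement's English description precedes it below -/
import Mathlib

section
/- Let F be a nonabelian free group of finite rank. If X ⊆ F is negligible and g ∈ F, then both the left translate g·X = {g·x : x ∈ X} and the right translate X·g = {x·g : x ∈ X} are negligible subsets of F. -/
open FirstOrder

/-- The formal inverse of a word (as a list of letters with exponents ±1). -/
def invWord {α : Type*} (u : List (α × Bool)) : List (α × Bool) :=
  (u.map fun x => (x.1, !x.2)).reverse

/-- `s = (p, u)` is an embedded subword of (the reduced word of) `w`:
`u` is a nonempty word occurring as the contiguous block of letters of the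
reduced word of `w` starting at position `p`. -/
def IsEmbeddedSubword {α : Type*} [DecidableEq α] (w : FreeGroup α)
    (s : ℕ × List (α × Bool)) : Prop :=
  s.2 ≠ [] ∧ (w.toWord.drop s.1).take s.2.length = s.2

/-- A proper embedded subword of `w` is an embedded subword which is not all of `w`. -/
def IsProperEmbeddedSubword {α : Type*} [DecidableEq α] (w : FreeGroup α)
    (s : ℕ × List (α × Bool)) : Prop :=
  IsEmbeddedSubword w s ∧ s.2.length < w.toWord.length

/-- Position `j` (a letter of the reduced word) is covered by the embedded subword `s`. -/
def CoversPos {α : Type*} (s : ℕ × List (α × Bool)) (j : ℕ) : Prop :=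
  s.1 ≤ j ∧ j < s.1 + s.2.length

/-- A subset `X` of a free group is negligible if there is `N : ℕ` such that for every
`ε > 0`, all but finitely many `w ∈ X` admit `N` pairs of proper embedded subwords
`(w_i, w_i')` with `w_i'` equal to `w_i` or to its inverse word, `w_i ≠ w_i'` as embedded
subwords, and such that the positions of `w` not covered by any of them number at most
`ε · length w`. -/
def Negligible {α : Type*} [DecidableEq α] (X : Set (FreeGroup α)) : Prop :=
  ∃ N : ℕ, ∀ ε : ℝ, 0 < ε → ∃ S : Finset (FreeGroup α),
    ∀ w ∈ X, w ∉ S →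
      ∃ sub : Fin N → (ℕ × List (α × Bool)) × (ℕ × List (α × Bool)),
        (∀ i, IsProperEmbeddedSubword w (sub i).1 ∧ IsProperEmbeddedSubword w (sub i).2) ∧
        (∀ i, (sub i).2.2 = (sub i).1.2 ∨ (sub i).2.2 = invWord (sub i).1.2) ∧
        (∀ i, (sub i).1 ≠ (sub i).2) ∧
        (({j : ℕ | j < w.toWord.length ∧
            ∀ i, ¬ CoversPos ((sub i).1) j ∧ ¬ CoversPos ((sub i).2) j}.ncard : ℝ)
          ≤ ε * w.toWord.length)

/-- The functions of the first-order language of groups: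
a constant `1`, a unary function `⁻¹` and a binary function `·`. -/
def groupFunctions : ℕ → Type
  | 0 => Unit
  | 1 => Unit
  | 2 => Unit
  | _ => Empty

/-- The first-order language of groups `(·, ⁻¹, 1)`. -/
def groupLang : Language := ⟨groupFunctions, fun _ => Empty⟩

/-- Any group is a structure for the language of groups in the natural way. -/
instance groupLangStructure (G : Type*) [Group G] : groupLang.Structure G where
  funMap {n} f x :=
    match n, f with
    | 0, _ => 1
    | 1, _ => (x 0)⁻¹
    | 2, _ => x 0 * x 1
    | (_ + 3), f => f.elim
  RelMap {n} r _ := r.elim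

/-- A subset of a group is definable if it is defined, with parameters, by a first-order
formula in the language of groups. -/
def IsDefinable {G : Type*} [Group G] (X : Set G) : Prop :=
  Set.Definable₁ (Set.univ : Set G) groupLang X

/-- A subset `X` of a group is (left) generic if finitely many left translates of `X`
cover the group. -/
def Generic {G : Type*} [Group G] (X : Set G) : Prop :=
  ∃ s : Finset G, ∀ x : G, ∃ g ∈ s, g⁻¹ * x ∈ X


/-!
Call the pairs `(w_i, w_i')` of the definition twin pairs. Reversing a word turns the twin pairs
of `x` into twin pairs of `x⁻¹` with the same uncovered positions, so negligibility passes to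
`X⁻¹`. Left multiplication by a letter either prepends it to the reduced word, which shifts every
pair and uncovers one position, or cancels the first letter. In the second case every pair is
trimmed by one letter at each end, so that it avoids the lost letter, at the cost of at most four
positions per pair; pairs too short to be trimmed are replaced by a copy of a long one, which
exists once the word is long compared with the number of pairs. Induction on `g` gives `g X`,
and `X g = (g⁻¹ X⁻¹)⁻¹`.
-/

open FreeGroup Filter

theorem Filter.Eventually.cofinite_image {β γ : Type*} {X : Set β} {f : β → γ} {P : γ → Prop}
    (h : ∀ᶠ x in cofinite, x ∈ X → P (f x)) : ∀ᶠ y in cofinite, y ∈ f '' X → P y := by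
  rw [eventually_cofinite] at h ⊢
  refine (h.image f).subset ?_
  intro y hy
  obtain ⟨⟨x, hx, rfl⟩, hP⟩ := Classical.not_imp.1 hy
  exact ⟨x, fun h => hP (h hx), rfl⟩

section

variable {α : Type*}

lemma invWord_eq_invRev : (invWord : List (α × Bool) → List (α × Bool)) = invRev := rfl

lemma invWord_tail_dropLast (u : List (α × Bool)) :
    invWord u.tail.dropLast = (invWord u).tail.dropLast := by
  simp only [invWord, List.tail_reverse, List.dropLast_reverse, List.map_tail, List.map_dropLast,
    List.tail_dropLast]

abbrev SubwordPair (α : Type*) := (ℕ × List (α × Bool)) × (ℕ × List (α × Bool))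

def uncovered {ι : Type*} (L : ℕ) (sub : ι → SubwordPair α) : Set ℕ :=
  {j | j < L ∧ ∀ i, ¬ CoversPos (sub i).1 j ∧ ¬ CoversPos (sub i).2 j}

/-- `σ` sends positions of the new word to positions of the old one, and `E` collects the new
positions at which coverage may be lost. -/
theorem ncard_uncovered_le {ι : Type*} {L L' : ℕ} {sub sub' : ι → SubwordPair α} (σ : ℕ → ℕ)
    (E : Finset ℕ) (hσ : Set.InjOn σ {j | j < L' ∧ j ∉ E})
    (hcov : ∀ j < L', j ∉ E → σ j < L ∧ ∀ i,
      (CoversPos (sub i).1 (σ j) ∨ CoversPos (sub i).2 (σ j)) →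
        CoversPos (sub' i).1 j ∨ CoversPos (sub' i).2 j) :
    (uncovered L' sub').ncard ≤ (uncovered L sub).ncard + E.card := by
  have hfin : (uncovered L' sub').Finite := (Set.finite_Iio L').subset fun j hj => hj.1
  calc (uncovered L' sub').ncard ≤ (uncovered L' sub' \ E).ncard + (E : Set ℕ).ncard :=
        (Set.ncard_le_ncard (Set.subset_sdiff_union _ _) (hfin.sdiff.union E.finite_toSet)).trans
          (Set.ncard_union_le _ _)
    _ ≤ (uncovered L sub).ncard + E.card := by
        rw [Set.ncard_coe_finset]
        refine add_le_add_left (Set.ncard_le_ncard_of_injOn (t := uncovered L sub) σ ?_ (hσ.mono ?_)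
          ((Set.finite_Iio L).subset fun j hj => hj.1)) _
        · rintro j ⟨⟨hj, hunc⟩, hjE⟩
          obtain ⟨hσL, himp⟩ := hcov j hj hjE
          exact ⟨hσL, fun i => not_or.1 fun hc => not_or.2 (hunc i) (himp i hc)⟩
        · rintro j ⟨⟨hj, -⟩, hjE⟩
          exact ⟨hj, hjE⟩

theorem length_le_ncard_uncovered_add {ι : Type*} [Fintype ι] (L : ℕ) (sub : ι → SubwordPair α) :
    L ≤ (uncovered L sub).ncard + ∑ i, ((sub i).1.2.length + (sub i).2.2.length) := by
  let empty : ι → SubwordPair α := fun _ => ((0, []), (0, []))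
  let E : Finset ℕ := Finset.univ.biUnion fun i =>
    Finset.Ico (sub i).1.1 ((sub i).1.1 + (sub i).1.2.length) ∪
      Finset.Ico (sub i).2.1 ((sub i).2.1 + (sub i).2.2.length)
  have hempty : uncovered L empty = Set.Iio L := by
    ext j
    simp [uncovered, empty, CoversPos]
  have hE : E.card ≤ ∑ i, ((sub i).1.2.length + (sub i).2.2.length) :=
    Finset.card_biUnion_le.trans <| Finset.sum_le_sum fun i _ =>
      (Finset.card_union_le _ _).trans (by simp)
  have := ncard_uncovered_le (L := L) (L' := L) (sub := sub) (sub' := empty) id E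
    (Set.injOn_id _) fun j hj hjE => ⟨hj, fun i hi => absurd
      (Finset.mem_biUnion.2 ⟨i, Finset.mem_univ _, by simpa [CoversPos] using hi⟩) hjE⟩
  rw [hempty, Set.ncard_Iio_nat] at this
  omega

variable [DecidableEq α]

theorem FreeGroup.IsReduced.invRev_ne_self {u : List (α × Bool)}
    (hu : IsReduced u) (hne : u ≠ []) : invRev u ≠ u := by
  intro h
  have hsq : mk u ^ 2 = 1 := by
    rw [sq]
    nth_rewrite 1 [← h]
    rw [← inv_mk, inv_mul_cancel]
  have h1 : mk u = 1 := (pow_eq_one_iff.1 hsq).resolve_right two_ne_zero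
  exact hne (by rw [← hu.reduce_eq, ← toWord_mk, h1, toWord_one])

theorem FreeGroup.toWord_mk_singleton_mul (a : α × Bool)
    (x : FreeGroup α) :
    (mk [a] * x).toWord = a :: x.toWord ∨ x.toWord = (a.1, !a.2) :: (mk [a] * x).toWord := by
  have hred : (mk [a] * x).toWord = reduce (a :: x.toWord) := by
    rw [← toWord_mk, ← mk_toWord (x := x), mul_mk, mk_toWord]
    rfl
  rw [hred, reduce.cons, reduce_toWord]
  rcases x.toWord with _ | ⟨b, L⟩
  · exact Or.inl rfl
  · dsimp only
    split_ifs with hab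
    · obtain ⟨h1, h2⟩ := hab
      exact Or.inr (by rw [h1, h2, Bool.not_not])
    · exact Or.inl rfl

theorem FreeGroup.eventually_le_length_toWord [Finite α] (B : ℕ) :
    ∀ᶠ w : FreeGroup α in cofinite, B ≤ w.toWord.length := by
  rw [eventually_cofinite]
  simp only [not_le]
  exact (List.finite_length_lt _ B).preimage toWord_injective.injOn

theorem isEmbeddedSubword_iff {w : FreeGroup α} {s : ℕ × List (α × Bool)} :
    IsEmbeddedSubword w s ↔ s.2 ≠ [] ∧ ∃ A B, w.toWord = A ++ s.2 ++ B ∧ A.length = s.1 := by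
  obtain ⟨p, u⟩ := s
  dsimp only [IsEmbeddedSubword]
  refine and_congr_right fun hu => ⟨fun h => ?_, ?_⟩
  · refine ⟨w.toWord.take p, (w.toWord.drop p).drop u.length, ?_, ?_⟩
    · conv_lhs => rw [← List.take_append_drop p w.toWord,
        ← List.take_append_drop u.length (w.toWord.drop p), h]
      simp
    · have := congrArg List.length h
      simp only [List.length_take, List.length_drop] at this
      have := List.length_pos_iff.2 hu
      simp only [List.length_take]
      omega
  · rintro ⟨A, B, hw, rfl⟩
    simp [hw]

theorem IsEmbeddedSubword.add_length_le {w : FreeGroup α} {s : ℕ × List (α × Bool)}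
    (h : IsEmbeddedSubword w s) : s.1 + s.2.length ≤ w.toWord.length := by
  obtain ⟨-, A, B, hw, hA⟩ := isEmbeddedSubword_iff.1 h
  simp only [hw, List.length_append, hA]
  omega

theorem IsEmbeddedSubword.isReduced {w : FreeGroup α} {s : ℕ × List (α × Bool)}
    (h : IsEmbeddedSubword w s) : IsReduced s.2 := by
  obtain ⟨-, A, B, hw, -⟩ := isEmbeddedSubword_iff.1 h
  exact isReduced_toWord.infix ⟨A, B, hw.symm⟩

def reflectSubword (L : ℕ) (s : ℕ × List (α × Bool)) : ℕ × List (α × Bool) :=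
  (L - (s.1 + s.2.length), invWord s.2)

theorem IsEmbeddedSubword.inv {x : FreeGroup α} {s : ℕ × List (α × Bool)}
    (h : IsEmbeddedSubword x s) : IsEmbeddedSubword x⁻¹ (reflectSubword x.toWord.length s) := by
  obtain ⟨hu, A, B, hx, hA⟩ := isEmbeddedSubword_iff.1 h
  refine isEmbeddedSubword_iff.2 ⟨by simpa [reflectSubword, invWord] using hu,
    invRev B, invRev A, ?_, ?_⟩
  · simp [reflectSubword, toWord_inv, hx, invRev_append, invWord_eq_invRev]
  · simp [reflectSubword, hx, invRev_length, ← hA]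
    omega

theorem IsEmbeddedSubword.cons {w x : FreeGroup α} {b : α × Bool} {s : ℕ × List (α × Bool)}
    (hw : w.toWord = b :: x.toWord) (h : IsEmbeddedSubword x s) :
    IsEmbeddedSubword w (s.1 + 1, s.2) := by
  obtain ⟨hu, A, B, hx, hA⟩ := isEmbeddedSubword_iff.1 h
  exact isEmbeddedSubword_iff.2 ⟨hu, b :: A, B, by rw [hw, hx]; rfl, by simp [hA]⟩

theorem IsEmbeddedSubword.trim {w x : FreeGroup α} {b : α × Bool} {s : ℕ × List (α × Bool)}
    (hx : x.toWord = b :: w.toWord) (hs : 3 ≤ s.2.length) (h : IsEmbeddedSubword x s) :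
    IsEmbeddedSubword w (s.1, s.2.tail.dropLast) := by
  obtain ⟨p, u⟩ := s
  obtain ⟨-, A, B, hxAB, hA⟩ := isEmbeddedSubword_iff.1 h
  dsimp only at hs hxAB hA ⊢
  obtain ⟨c, v, rfl⟩ := List.exists_cons_of_length_pos (by omega : 0 < u.length)
  obtain ⟨m, d, rfl⟩ := (List.eq_nil_or_concat v).resolve_left (by rintro rfl; simp at hs)
  have hm : m ≠ [] := by rintro rfl; simp at hs
  refine isEmbeddedSubword_iff.2 ⟨by simpa using hm, (A ++ [c]).tail, [d] ++ B, ?_, by simp [hA]⟩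
  have hw : w.toWord = x.toWord.tail := by simp [hx]
  rw [hw, hxAB]
  cases A <;> simp

def IsTwinPair (w : FreeGroup α) (q : SubwordPair α) : Prop :=
  (IsProperEmbeddedSubword w q.1 ∧ IsProperEmbeddedSubword w q.2) ∧
    (q.2.2 = q.1.2 ∨ q.2.2 = invWord q.1.2) ∧ q.1 ≠ q.2

theorem IsTwinPair.length_eq {w : FreeGroup α} {q : SubwordPair α} (h : IsTwinPair w q) :
    q.2.2.length = q.1.2.length := by
  rcases h.2.1 with h | h <;> simp [h, invWord]

theorem IsTwinPair.inv {x : FreeGroup α} {q : SubwordPair α} (h : IsTwinPair x q) :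
    IsTwinPair x⁻¹ (reflectSubword x.toWord.length q.1, reflectSubword x.toWord.length q.2) := by
  obtain ⟨⟨⟨h₁, hl₁⟩, ⟨h₂, hl₂⟩⟩, hrel, hne⟩ := h
  have hL : x⁻¹.toWord.length = x.toWord.length := by rw [toWord_inv, invRev_length]
  refine ⟨⟨⟨h₁.inv, ?_⟩, ⟨h₂.inv, ?_⟩⟩, ?_, ?_⟩
  · simpa [reflectSubword, invWord_eq_invRev, hL] using hl₁
  · simpa [reflectSubword, invWord_eq_invRev, hL] using hl₂
  · rcases hrel with hrel | hrel
    · exact Or.inl (by simp [reflectSubword, hrel])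
    · exact Or.inr (by simp [reflectSubword, hrel, invWord_eq_invRev, invRev_invRev])
  · have hb₁ := h₁.add_length_le
    have hb₂ := h₂.add_length_le
    intro heq
    simp only [reflectSubword, Prod.mk.injEq, invWord_eq_invRev] at heq
    have hu := invRev_injective heq.2
    refine hne (Prod.ext ?_ hu)
    rw [hu] at hb₁ heq
    omega

theorem IsTwinPair.cons {w x : FreeGroup α} {b : α × Bool} {q : SubwordPair α}
    (hw : w.toWord = b :: x.toWord) (h : IsTwinPair x q) :
    IsTwinPair w ((q.1.1 + 1, q.1.2), (q.2.1 + 1, q.2.2)) := by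
  obtain ⟨⟨⟨h₁, hl₁⟩, ⟨h₂, hl₂⟩⟩, hrel, hne⟩ := h
  refine ⟨⟨⟨h₁.cons hw, ?_⟩, ⟨h₂.cons hw, ?_⟩⟩, hrel, ?_⟩ <;> dsimp only
  · rw [hw, List.length_cons]; omega
  · rw [hw, List.length_cons]; omega
  · intro heq
    simp only [Prod.mk.injEq, add_left_inj] at heq
    exact hne (Prod.ext heq.1 heq.2)

def trimPair (q : SubwordPair α) : SubwordPair α :=
  ((q.1.1, q.1.2.tail.dropLast), (q.2.1, q.2.2.tail.dropLast))

theorem IsTwinPair.trim {w x : FreeGroup α} {b : α × Bool} {q : SubwordPair α}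
    (hx : x.toWord = b :: w.toWord) (h : IsTwinPair x q) (hq : 3 ≤ q.1.2.length) :
    IsTwinPair w (trimPair q) := by
  have hq' : 3 ≤ q.2.2.length := h.length_eq ▸ hq
  obtain ⟨⟨⟨h₁, hl₁⟩, ⟨h₂, hl₂⟩⟩, hrel, hne⟩ := h
  have hL : x.toWord.length = w.toWord.length + 1 := by rw [hx, List.length_cons]
  refine ⟨⟨⟨h₁.trim hx hq, ?_⟩, ⟨h₂.trim hx hq', ?_⟩⟩, ?_, ?_⟩
  · simp only [trimPair, List.length_dropLast, List.length_tail]; omega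
  · simp only [trimPair, List.length_dropLast, List.length_tail]; omega
  · rcases hrel with hrel | hrel
    · exact Or.inl (by simp [trimPair, hrel])
    · exact Or.inr (by simp [trimPair, hrel, invWord_tail_dropLast])
  · intro heq
    simp only [trimPair, Prod.mk.injEq] at heq
    rcases hrel with hrel | hrel
    · exact hne (Prod.ext heq.1 hrel.symm)
    · have hred := (h₁.trim hx hq).isReduced
      have hnil : q.1.2.tail.dropLast ≠ [] := by
        rw [← List.length_pos_iff]; simp only [List.length_dropLast, List.length_tail]; omega
      rw [hrel, ← invWord_tail_dropLast] at heq
      exact hred.invRev_ne_self hnil heq.2.symm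

def HasTwinCover (w : FreeGroup α) (N : ℕ) (c : ℝ) : Prop :=
  ∃ sub : Fin N → SubwordPair α,
    (∀ i, IsTwinPair w (sub i)) ∧ ((uncovered w.toWord.length sub).ncard : ℝ) ≤ c

theorem HasTwinCover.mono {w : FreeGroup α} {N : ℕ} {c c' : ℝ} (h : HasTwinCover w N c)
    (hc : c ≤ c') : HasTwinCover w N c' :=
  let ⟨sub, hsub, hcount⟩ := h
  ⟨sub, hsub, hcount.trans hc⟩

theorem HasTwinCover.inv {x : FreeGroup α} {N : ℕ} {c : ℝ} (h : HasTwinCover x N c) :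
    HasTwinCover x⁻¹ N c := by
  obtain ⟨sub, hsub, hcount⟩ := h
  set L := x.toWord.length
  let sub' i := (reflectSubword L (sub i).1, reflectSubword L (sub i).2)
  have hL : x⁻¹.toWord.length = L := by rw [toWord_inv, invRev_length]
  refine ⟨sub', fun i => (hsub i).inv, le_trans ?_ hcount⟩
  have hmirror : ∀ s : ℕ × List (α × Bool), s.1 + s.2.length ≤ L → ∀ j < L,
      CoversPos s (L - 1 - j) → CoversPos (reflectSubword L s) j := by
    intro s hs j hj hcov
    simp only [CoversPos, reflectSubword, invWord, List.length_reverse, List.length_map] at hcov ⊢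
    omega
  have := ncard_uncovered_le (L := L) (L' := L) (sub := sub) (sub' := sub')
    (fun j => L - 1 - j) ∅
    (fun j hj j' hj' h => by have := hj.1; have := hj'.1; dsimp only at h; omega)
    fun j hj _ => ⟨by omega, fun i hi => hi.imp (hmirror _ (hsub i).1.1.1.add_length_le j hj)
      (hmirror _ (hsub i).1.2.1.add_length_le j hj)⟩
  rw [hL]
  exact_mod_cast this.trans (by simp)

theorem HasTwinCover.cons {w x : FreeGroup α} {b : α × Bool} {N : ℕ} {c : ℝ}
    (hw : w.toWord = b :: x.toWord) (h : HasTwinCover x N c) : HasTwinCover w N (c + 1) := by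
  obtain ⟨sub, hsub, hcount⟩ := h
  let sub' i := (((sub i).1.1 + 1, (sub i).1.2), ((sub i).2.1 + 1, (sub i).2.2))
  refine ⟨sub', fun i => (hsub i).cons hw, ?_⟩
  have hshift : ∀ (s : ℕ × List (α × Bool)) (j : ℕ), j ≠ 0 →
      CoversPos s (j - 1) → CoversPos (s.1 + 1, s.2) j := by
    intro s j hj hcov
    simp only [CoversPos] at hcov ⊢
    omega
  have := ncard_uncovered_le (L := x.toWord.length) (L' := w.toWord.length) (sub := sub)
    (sub' := sub') (fun j => j - 1) {0} (fun j hj j' hj' h => by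
      have := hj.2; have := hj'.2; simp only [Finset.mem_singleton] at *; omega)
    fun j hj hj0 => by
      rw [Finset.mem_singleton] at hj0
      rw [hw, List.length_cons] at hj
      exact ⟨by omega, fun i hi => hi.imp (hshift _ j hj0) (hshift _ j hj0)⟩
  rw [Finset.card_singleton] at this
  have : ((uncovered w.toWord.length sub').ncard : ℝ) ≤ (uncovered x.toWord.length sub).ncard + 1 :=
    by exact_mod_cast this
  linarith

theorem IsTwinPair.exists_three_le_length {x : FreeGroup α} {N : ℕ}
    {sub : Fin N → SubwordPair α} (hsub : ∀ i, IsTwinPair x (sub i))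
    (hlong : (uncovered x.toWord.length sub).ncard + 4 * N < x.toWord.length) :
    ∃ i, 3 ≤ (sub i).1.2.length := by
  by_contra! hshort
  have hsum : ∑ i, ((sub i).1.2.length + (sub i).2.2.length) ≤ 4 * N :=
    calc ∑ i, ((sub i).1.2.length + (sub i).2.2.length) ≤ ∑ _ : Fin N, 4 :=
          Finset.sum_le_sum fun i _ => by have := (hsub i).length_eq; have := hshort i; omega
      _ = 4 * N := by simp [mul_comm]
  have := length_le_ncard_uncovered_add x.toWord.length sub
  omega

theorem HasTwinCover.tail {w x : FreeGroup α} {b : α × Bool} {N : ℕ} {c : ℝ}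
    (hx : x.toWord = b :: w.toWord) (hc : c + 4 * N < x.toWord.length)
    (h : HasTwinCover x N c) : HasTwinCover w N (c + 4 * N) := by
  obtain ⟨sub, hsub, hcount⟩ := h
  obtain ⟨i₀, hi₀⟩ := IsTwinPair.exists_three_le_length hsub <| by
    have : ((uncovered x.toWord.length sub).ncard : ℝ) + 4 * N < x.toWord.length := by linarith
    exact_mod_cast this
  -- short pairs cannot be trimmed and are replaced by a copy of the long pair `i₀`
  let sub' i := if 3 ≤ (sub i).1.2.length then trimPair (sub i) else trimPair (sub i₀)
  have hsub' : ∀ i, IsTwinPair w (sub' i) := fun i => by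
    by_cases hi : 3 ≤ (sub i).1.2.length
    · simpa [sub', hi] using (hsub i).trim hx hi
    · simpa [sub', hi] using (hsub i₀).trim hx hi₀
  refine ⟨sub', hsub', ?_⟩
  let E : Finset ℕ := Finset.univ.biUnion fun i =>
    {(sub i).1.1 - 1, (sub i).1.1 + (sub i).1.2.length - 2,
      (sub i).2.1 - 1, (sub i).2.1 + (sub i).2.2.length - 2}
  have hE : E.card ≤ 4 * N :=
    Finset.card_biUnion_le.trans <| (Finset.sum_le_sum fun _ _ => Finset.card_le_four).trans
      (by simp [mul_comm])
  have htrim : ∀ (s : ℕ × List (α × Bool)) (j : ℕ), CoversPos s (j + 1) → j ≠ s.1 - 1 →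
      j ≠ s.1 + s.2.length - 2 → 3 ≤ s.2.length ∧ CoversPos (s.1, s.2.tail.dropLast) j := by
    intro s j hcov h₁ h₂
    simp only [CoversPos, List.length_dropLast, List.length_tail] at hcov ⊢
    omega
  have hL : x.toWord.length = w.toWord.length + 1 := by rw [hx, List.length_cons]
  have := ncard_uncovered_le (L := x.toWord.length) (L' := w.toWord.length) (sub := sub)
    (sub' := sub') (fun j => j + 1) E (fun j _ j' _ h => by dsimp only at h; omega)
    fun j hj hjE => by
      refine ⟨by omega, fun i hi => ?_⟩
      have hjE' : ∀ a ∈ ({(sub i).1.1 - 1, (sub i).1.1 + (sub i).1.2.length - 2,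
          (sub i).2.1 - 1, (sub i).2.1 + (sub i).2.2.length - 2} : Finset ℕ), j ≠ a :=
        fun a ha hja => hjE (Finset.mem_biUnion.2 ⟨i, Finset.mem_univ _, hja ▸ ha⟩)
      simp only [Finset.mem_insert, Finset.mem_singleton, forall_eq_or_imp, forall_eq] at hjE'
      have hlen := (hsub i).length_eq
      rcases hi with hi | hi
      · obtain ⟨hlong, hcov⟩ := htrim _ j hi hjE'.1 hjE'.2.1
        exact Or.inl (by simpa [sub', hlong, trimPair] using hcov)
      · obtain ⟨hlong, hcov⟩ := htrim _ j hi hjE'.2.2.1 hjE'.2.2.2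
        exact Or.inr (by simpa [sub', hlen ▸ hlong, trimPair] using hcov)
  have : ((uncovered w.toWord.length sub').ncard : ℝ) ≤
      (uncovered x.toWord.length sub).ncard + 4 * N := by exact_mod_cast this.trans (by omega)
  linarith

theorem negligible_iff_eventually {X : Set (FreeGroup α)} :
    Negligible X ↔ ∃ N, ∀ ε > 0,
      ∀ᶠ w in cofinite, w ∈ X → HasTwinCover w N (ε * w.toWord.length) := by
  have hfin : ∀ P : FreeGroup α → Prop,
      (∃ S : Finset (FreeGroup α), ∀ w ∈ X, w ∉ S → P w) ↔ ∀ᶠ w in cofinite, w ∈ X → P w := by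
    intro P
    rw [eventually_cofinite]
    refine ⟨fun ⟨S, hS⟩ => S.finite_toSet.subset fun w hw => ?_, fun h => ⟨h.toFinset, ?_⟩⟩
    · by_contra hwS
      exact hw fun hwX => hS w hwX hwS
    · intro w hwX hwS
      by_contra hP
      exact hwS (h.mem_toFinset.2 fun h' => hP (h' hwX))
  simp only [Negligible, HasTwinCover, IsTwinPair, uncovered, forall_and, ← hfin, and_assoc]

theorem Negligible.image_of_transfer [Finite α] {X : Set (FreeGroup α)} (hX : Negligible X)
    (f : FreeGroup α → FreeGroup α) (D : ℕ → ℕ)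
    (hlen : ∀ N x, x.toWord.length ≤ (f x).toWord.length + D N)
    (hf : ∀ N x (c : ℝ), c + D N < x.toWord.length → HasTwinCover x N c →
      HasTwinCover (f x) N (c + D N)) :
    Negligible (f '' X) := by
  rw [negligible_iff_eventually] at hX ⊢
  obtain ⟨N, hN⟩ := hX
  refine ⟨N, fun ε hε => Eventually.cofinite_image ?_⟩
  obtain ⟨B, hB⟩ := exists_nat_ge (3 * D N / ε)
  have hδ : 0 < min ε 1 / 2 := by positivity
  filter_upwards [hN _ hδ, eventually_le_length_toWord (B + 2 * D N + 1)] with x hx hlong hxX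
  have hmin₁ : min ε 1 ≤ ε := min_le_left _ _
  have hmin₂ : min ε 1 ≤ 1 := min_le_right _ _
  have hlong' : (B + 2 * D N + 1 : ℝ) ≤ x.toWord.length := by exact_mod_cast hlong
  have hlenx : (x.toWord.length : ℝ) ≤ (f x).toWord.length + D N := by exact_mod_cast hlen N x
  have hB' : 3 * D N ≤ ε * B := by rw [div_le_iff₀ hε] at hB; linarith
  -- `δ |x| + D < |x|` as `|x| > 2 D`, and `δ |x| + D ≤ ε |f x| / 2 + 3 D / 2 ≤ ε |f x|` as
  -- `|f x| ≥ B`, where `δ = min ε 1 / 2`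
  refine (hf N x _ ?_ (hx hxX)).mono ?_ <;> nlinarith

theorem Negligible.image_inv [Finite α] {X : Set (FreeGroup α)} (hX : Negligible X) :
    Negligible (Inv.inv '' X) :=
  hX.image_of_transfer _ (fun _ => 0) (fun _ x => by simp [toWord_inv, invRev_length])
    fun _ _ _ _ h => by simpa using h.inv

theorem Negligible.image_mk_singleton_mul [Finite α] {X : Set (FreeGroup α)} (hX : Negligible X)
    (a : α × Bool) : Negligible ((mk [a] * ·) '' X) := by
  refine hX.image_of_transfer _ (fun N => 4 * N + 1) (fun N x => ?_) fun N x c hc h => ?_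
  · rcases toWord_mk_singleton_mul a x with hw | hx
    · rw [hw, List.length_cons]; omega
    · rw [hx, List.length_cons]; omega
  · push_cast at hc ⊢
    rcases toWord_mk_singleton_mul a x with hw | hx
    · exact (h.cons hw).mono (by linarith)
    · exact (h.tail hx (by linarith)).mono (by linarith)

theorem Negligible.image_mul_left [Finite α] {X : Set (FreeGroup α)} (hX : Negligible X)
    (g : FreeGroup α) : Negligible ((g * ·) '' X) := by
  rw [← mk_toWord (x := g)]
  induction g.toWord with
  | nil => simpa [← one_eq_mk] using hX
  | cons a L ih =>
    rw [← List.singleton_append, ← mul_mk]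
    simpa only [Set.image_image, mul_assoc] using ih.image_mk_singleton_mul a

theorem Negligible.image_mul_right [Finite α] {X : Set (FreeGroup α)} (hX : Negligible X)
    (g : FreeGroup α) : Negligible ((· * g) '' X) := by
  have : (· * g) = Inv.inv ∘ (g⁻¹ * ·) ∘ Inv.inv := by
    funext x
    simp
  rw [this, Set.image_comp, Set.image_comp]
  exact (hX.image_inv.image_mul_left g⁻¹).image_inv

end

theorem negligible_translate_general (n : ℕ) (X : Set (FreeGroup (Fin n)))
    (hX : Negligible X) (g : FreeGroup (Fin n)) :
    Negligible ((fun x => g * x) '' X) ∧ Negligible ((fun x => x * g) '' X) :=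
  ⟨hX.image_mul_left g, hX.image_mul_right g⟩

/-- Left and right translates of a negligible subset of a nonabelian free group of finite
rank are negligible. -/
theorem negligible_translate (n : ℕ) (hn : 2 ≤ n) (X : Set (FreeGroup (Fin n)))
    (hX : Negligible X) (g : FreeGroup (Fin n)) :
    Negligible ((fun x => g * x) '' X) ∧ Negligible ((fun x => x * g) '' X) :=
  negligible_translate_general n X hX g
end

section
/- Let F_ω be the free group on a countably infinite sequence of free generators e_1, e_2, e_3, …. Then there do not exist two disjoint definable generic subsets of F_ω. -/
open FirstOrder

/-!
The parameters of formulas defining `X` and `Y`, and the finitely many elements whose translates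
of `X` and `Y` cover the group, all lie in the subgroup `H` generated by the free generators other
than some `e`. For `g ∈ H`, the transvection `e ↦ g e` fixing the other generators is an automorphism
fixing `H` pointwise, so it preserves `X` and `Y` and maps `g⁻¹ e` to `e`. Since some `g⁻¹ e` lies
in `X`, so does `e`; likewise `e ∈ Y`.
-/

namespace Set.Definable

open Language

variable {L : Language} {M : Type*} [L.Structure M] {A : Set M} {α : Type*} {s : Set (α → M)}

theorem comp_mem_iff (h : A.Definable L s) (σ : M ≃[L] M) (hσ : ∀ a ∈ A, σ a = a)
    (x : α → M) : σ ∘ x ∈ s ↔ x ∈ s := by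
  obtain ⟨φ, rfl⟩ := definable_iff_exists_formula_sum.1 h
  have hparams : σ ∘ Sum.elim ((↑) : A → M) x = Sum.elim (↑) (σ ∘ x) := by
    ext (a | i)
    · exact hσ a a.2
    · rfl
  simp only [mem_ofPred_eq, ← hparams, StrongHomClass.realize_formula]

end Set.Definable

def MulEquiv.toGroupLangEquiv {G H : Type*} [Group G] [Group H] (σ : G ≃* H) :
    G ≃[groupLang] H where
  toEquiv := σ.toEquiv
  map_fun' {n} f _ :=
    match n, f with
    | 0, _ => map_one σ
    | 1, _ => map_inv σ _
    | 2, _ => map_mul σ _ _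
  map_rel' r := r.elim

theorem IsDefinable.exists_finset_forall_mulEquiv_mem_iff {G : Type*} [Group G] {X : Set G}
    (hX : IsDefinable X) :
    ∃ T : Finset G, ∀ σ : G ≃* G, (∀ t ∈ T, σ t = t) → ∀ x, σ x ∈ X ↔ x ∈ X := by
  obtain ⟨T, -, hT⟩ := Set.definable_iff_finitely_definable.1 hX
  exact ⟨T, fun σ hσ x => hT.comp_mem_iff σ.toGroupLangEquiv hσ fun _ => x⟩

namespace FreeGroup

variable {α : Type*}

theorem exists_finset_mem_closure_image_of (w : FreeGroup α) :
    ∃ S : Finset α, w ∈ Subgroup.closure (of '' S) := by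
  classical
  induction w using FreeGroup.induction_on with
  | C1 => exact ⟨∅, one_mem _⟩
  | of a => exact ⟨{a}, Subgroup.subset_closure (by simp)⟩
  | inv_of a h => obtain ⟨S, hS⟩ := h; exact ⟨S, inv_mem hS⟩
  | mul u v hu hv =>
    obtain ⟨S, hS⟩ := hu
    obtain ⟨S', hS'⟩ := hv
    have mono {T T' : Finset α} (h : T ⊆ T') :=
      Subgroup.closure_mono (Set.image_mono (f := of) (Finset.coe_subset.2 h))
    exact ⟨S ∪ S', mul_mem (mono Finset.subset_union_left hS) (mono Finset.subset_union_right hS')⟩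

theorem exists_subset_closure_image_of_compl [Infinite α] {F : Set (FreeGroup α)}
    (hF : F.Finite) : ∃ a : α, F ⊆ Subgroup.closure (of '' {a}ᶜ) := by
  classical
  choose S hS using exists_finset_mem_closure_image_of (α := α)
  obtain ⟨a, ha⟩ := Infinite.exists_notMem_finset (hF.toFinset.biUnion S)
  refine ⟨a, fun w hw => Subgroup.closure_mono (Set.image_mono ?_) (hS w)⟩
  rintro b hb rfl
  exact ha (Finset.mem_biUnion.2 ⟨w, hF.mem_toFinset.2 hw, hb⟩)

variable [DecidableEq α]

def transvectionHom (a : α) (v : FreeGroup α) : FreeGroup α →* FreeGroup α :=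
  lift (Function.update of a (v * of a))

theorem transvectionHom_of_self (a : α) (v : FreeGroup α) :
    transvectionHom a v (of a) = v * of a := by
  simp [transvectionHom]

theorem transvectionHom_of_ne {a b : α} (v : FreeGroup α) (h : b ≠ a) :
    transvectionHom a v (of b) = of b := by
  simp [transvectionHom, h]

theorem transvectionHom_apply_of_mem {a : α} (v : FreeGroup α) {w : FreeGroup α}
    (hw : w ∈ Subgroup.closure (of '' {a}ᶜ)) : transvectionHom a v w = w := by
  induction hw using Subgroup.closure_induction with
  | mem x hx =>
    obtain ⟨b, hb, rfl⟩ := hx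
    exact transvectionHom_of_ne v hb
  | one => exact _root_.map_one _
  | mul x y _ _ hx hy => rw [_root_.map_mul, hx, hy]
  | inv x _ hx => rw [_root_.map_inv, hx]

theorem transvectionHom_comp {a : α} (v : FreeGroup α) {v' : FreeGroup α}
    (hv' : v' ∈ Subgroup.closure (of '' {a}ᶜ)) :
    (transvectionHom a v).comp (transvectionHom a v') = transvectionHom a (v' * v) := by
  ext b
  rcases eq_or_ne b a with rfl | hb
  · simp [transvectionHom_of_self, transvectionHom_apply_of_mem v hv', mul_assoc]
  · simp [transvectionHom_of_ne _ hb]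

theorem transvectionHom_one (a : α) : transvectionHom a 1 = MonoidHom.id (FreeGroup α) := by
  ext b
  rcases eq_or_ne b a with rfl | hb
  · simp [transvectionHom_of_self]
  · simp [transvectionHom_of_ne _ hb]

def transvection (a : α) (v : FreeGroup α) (hv : v ∈ Subgroup.closure (of '' {a}ᶜ)) :
    FreeGroup α ≃* FreeGroup α :=
  (transvectionHom a v).toMulEquiv (transvectionHom a v⁻¹)
    (by rw [transvectionHom_comp _ hv, mul_inv_cancel, transvectionHom_one])
    (by rw [transvectionHom_comp _ (inv_mem hv), inv_mul_cancel, transvectionHom_one])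

theorem exists_forall_exists_mulEquiv_of_eq_mul_of [Infinite α] {F : Set (FreeGroup α)}
    (hF : F.Finite) :
    ∃ a : α, ∀ g ∈ F, ∃ σ : FreeGroup α ≃* FreeGroup α,
      (∀ t ∈ F, σ t = t) ∧ σ (of a) = g * of a := by
  classical
  obtain ⟨a, ha⟩ := exists_subset_closure_image_of_compl hF
  exact ⟨a, fun g hg => ⟨transvection a g (ha hg),
    fun t ht => transvectionHom_apply_of_mem g (ha ht), transvectionHom_of_self a g⟩⟩

end FreeGroup

/-- There do not exist two disjoint definable generic subsets of the free group on
countably many generators. -/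
theorem no_disjoint_generics (X Y : Set (FreeGroup ℕ))
    (hX : IsDefinable X) (hY : IsDefinable Y) (hXg : Generic X) (hYg : Generic Y) :
    ¬ Disjoint X Y := by
  obtain ⟨TX, hTX⟩ := hX.exists_finset_forall_mulEquiv_mem_iff
  obtain ⟨TY, hTY⟩ := hY.exists_finset_forall_mulEquiv_mem_iff
  obtain ⟨sX, hsX⟩ := hXg
  obtain ⟨sY, hsY⟩ := hYg
  set F := TX ∪ TY ∪ sX ∪ sY
  obtain ⟨a, ha⟩ := FreeGroup.exists_forall_exists_mulEquiv_of_eq_mul_of F.finite_toSet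
  have of_mem {Z : Set (FreeGroup ℕ)} {T s : Finset (FreeGroup ℕ)} (hT : T ⊆ F) (hs : s ⊆ F)
      (hZ : ∀ σ : FreeGroup ℕ ≃* FreeGroup ℕ, (∀ t ∈ T, σ t = t) → ∀ x, σ x ∈ Z ↔ x ∈ Z)
      (hsZ : ∀ x, ∃ g ∈ s, g⁻¹ * x ∈ Z) : FreeGroup.of a ∈ Z := by
    obtain ⟨g, hg, hgZ⟩ := hsZ (FreeGroup.of a)
    obtain ⟨σ, hσF, hσa⟩ := ha g (hs hg)
    have := (hZ σ (fun t ht => hσF t (hT ht)) _).2 hgZ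
    rwa [map_mul, map_inv, hσF g (hs hg), hσa, inv_mul_cancel_left] at this
  intro hXY
  exact Set.disjoint_left.1 hXY (of_mem (by grind) (by grind) hTX hsX)
    (of_mem (by grind) (by grind) hTY hsY)
end
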